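/- There exists a constant b_c < ∞, depending only on b₀, ρ₀ and ‖c‖_v, such that for every α ∈ (0,1) and all x, y ∈ ℝ^d, |h_α(x) − h_α(y)| ≤ b_c ( v(x) + v(y) ), where h_α(x) := Σ_{t=0}^∞ α^t P^t c(x); in particular this bound is uniform over the discount factor α. -/

import Mathlib

/-! Writing `a_t(x) = P^t c(x)`, ergodicity gives `|a_t(x) - c̄| ≤ b₀ ‖c‖_v v(x) ρ₀^t`. The
discount `α^t ≤ 1` can then be dropped termwise from `h_α(x) - h_α(y) = ∑ α^t (a_t(x) - a_t(y))`,
and the geometric series in `ρ₀` yields the constant `b₀ ‖c‖_v / (1 - ρ₀)`, free of `α`. -/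

open MeasureTheory ProbabilityTheory Filter Topology

/-- Iterates of a Markov kernel: `kiter P t = P^t`, with `P^0` the identity kernel. -/
noncomputable def kiter {α : Type*} [MeasurableSpace α] (P : Kernel α α) : ℕ → Kernel α α
  | 0 => Kernel.id
  | t + 1 => (kiter P t).comp P

section GeometricConvergence

variable {a b : ℕ → ℝ} {m K L ρ α : ℝ}

lemma abs_le_of_abs_sub_le_geometric (hρ0 : 0 ≤ ρ) (hρ1 : ρ ≤ 1)
    (h : ∀ t, |a t - m| ≤ K * ρ ^ t) (t : ℕ) : |a t| ≤ |m| + |K| := by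
  have hK : K * ρ ^ t ≤ |K| :=
    calc K * ρ ^ t ≤ |K| * ρ ^ t := by gcongr; exact le_abs_self K
      _ ≤ |K| := mul_le_of_le_one_right (abs_nonneg K) (pow_le_one₀ hρ0 hρ1)
  calc |a t| = |m + (a t - m)| := by rw [add_sub_cancel]
    _ ≤ |m| + |a t - m| := abs_add_le _ _
    _ ≤ |m| + |K| := by linarith [h t]

lemma summable_abs_pow_mul_of_abs_sub_le_geometric (hα0 : 0 ≤ α) (hα1 : α < 1)
    (hρ0 : 0 ≤ ρ) (hρ1 : ρ ≤ 1) (h : ∀ t, |a t - m| ≤ K * ρ ^ t) :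
    Summable fun t => |α ^ t * a t| :=
  ((summable_geometric_of_lt_one hα0 hα1).mul_right (|m| + |K|)).of_nonneg_of_le
    (fun t => abs_nonneg _) fun t => by
      rw [abs_mul, abs_pow, abs_of_nonneg hα0]
      exact mul_le_mul_of_nonneg_left (abs_le_of_abs_sub_le_geometric hρ0 hρ1 h t)
        (pow_nonneg hα0 t)

lemma abs_tsum_pow_mul_sub_le_of_abs_sub_le_geometric (hα0 : 0 ≤ α) (hα1 : α ≤ 1)
    (hρ0 : 0 ≤ ρ) (hρ1 : ρ < 1) (ha : Summable fun t => α ^ t * a t)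
    (hb : Summable fun t => α ^ t * b t)
    (ham : ∀ t, |a t - m| ≤ K * ρ ^ t) (hbm : ∀ t, |b t - m| ≤ L * ρ ^ t) :
    |∑' t, α ^ t * a t - ∑' t, α ^ t * b t| ≤ (K + L) / (1 - ρ) := by
  rw [← ha.tsum_sub hb, div_eq_mul_inv]
  refine tsum_of_norm_bounded (f := fun t => α ^ t * a t - α ^ t * b t)
    ((hasSum_geometric_of_lt_one hρ0 hρ1).mul_left (K + L)) fun t => ?_
  calc ‖α ^ t * a t - α ^ t * b t‖ = α ^ t * |(a t - m) - (b t - m)| := by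
        rw [Real.norm_eq_abs, ← mul_sub, abs_mul, abs_of_nonneg (pow_nonneg hα0 t),
          sub_sub_sub_cancel_right]
    _ ≤ |(a t - m) - (b t - m)| := mul_le_of_le_one_left (abs_nonneg _) (pow_le_one₀ hα0 hα1)
    _ ≤ |a t - m| + |b t - m| := abs_sub _ _
    _ ≤ (K + L) * ρ ^ t := by linarith [ham t, hbm t]

end GeometricConvergence

theorem discounted_value_difference_bound_general
    (d : ℕ) (P : Kernel (Fin d → ℝ) (Fin d → ℝ))
    (π : Measure (Fin d → ℝ))
    (v : (Fin d → ℝ) → ℝ)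
    (b₀ ρ₀ : ℝ) (hρ₀ : ρ₀ ∈ Set.Ioo (0 : ℝ) 1)
    (herg : ∀ f : (Fin d → ℝ) → ℝ, Measurable f → ∀ C : ℝ, (∀ x, |f x| ≤ C * v x) →
      Integrable f π ∧ (∀ t x, Integrable f (kiter P t x)) ∧
        ∀ t x, |(∫ y, f y ∂(kiter P t x)) - ∫ y, f y ∂π| ≤ b₀ * ρ₀ ^ t * C * v x)
    (c : (Fin d → ℝ) → ℝ) (hcmeas : Measurable c) (Cc : ℝ) (hc : ∀ x, |c x| ≤ Cc * v x) :
    ∃ bc : ℝ, ∀ α ∈ Set.Ioo (0 : ℝ) 1, ∀ x y,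
      Summable (fun t : ℕ => |α ^ t * ∫ z, c z ∂(kiter P t x)|) ∧
      Summable (fun t : ℕ => |α ^ t * ∫ z, c z ∂(kiter P t y)|) ∧
      |(∑' t : ℕ, α ^ t * ∫ z, c z ∂(kiter P t x)) -
          ∑' t : ℕ, α ^ t * ∫ z, c z ∂(kiter P t y)| ≤ bc * (v x + v y) := by
  obtain ⟨hρ0, hρ1⟩ := hρ₀
  obtain ⟨-, -, hconv⟩ := herg c hcmeas Cc hc
  have hgeom : ∀ x t, |∫ z, c z ∂(kiter P t x) - ∫ z, c z ∂π| ≤ b₀ * Cc * v x * ρ₀ ^ t :=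
    fun x t => (hconv t x).trans_eq (by ring)
  refine ⟨b₀ * Cc / (1 - ρ₀), fun α ⟨hα0, hα1⟩ x y => ?_⟩
  have hsum : ∀ z, Summable fun t => |α ^ t * ∫ w, c w ∂(kiter P t z)| := fun z =>
    summable_abs_pow_mul_of_abs_sub_le_geometric hα0.le hα1 hρ0.le hρ1.le (hgeom z)
  refine ⟨hsum x, hsum y, ?_⟩
  calc _ ≤ (b₀ * Cc * v x + b₀ * Cc * v y) / (1 - ρ₀) :=
        abs_tsum_pow_mul_sub_le_of_abs_sub_le_geometric hα0.le hα1.le hρ0.le hρ1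
          (hsum x).of_abs (hsum y).of_abs (hgeom x) (hgeom y)
    _ = b₀ * Cc / (1 - ρ₀) * (v x + v y) := by ring

/-- There is a constant `b_c` such that uniformly over `α ∈ (0,1)` and
all `x, y`, `|h_α(x) − h_α(y)| ≤ b_c (v(x) + v(y))`, where `h_α(x) = ∑ α^t P^t c(x)`. -/
theorem discounted_value_difference_bound
    (d : ℕ) (P : Kernel (Fin d → ℝ) (Fin d → ℝ)) [IsMarkovKernel P]
    (π : Measure (Fin d → ℝ)) [IsProbabilityMeasure π]
    (hinv : π.bind (⇑P) = π)
    (v : (Fin d → ℝ) → ℝ) (hv1 : ∀ x, 1 ≤ v x) (hvmeas : Measurable v)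
    (hvint : Integrable v π)
    (b₀ ρ₀ : ℝ) (hρ₀ : ρ₀ ∈ Set.Ioo (0 : ℝ) 1)
    (herg : ∀ f : (Fin d → ℝ) → ℝ, Measurable f → ∀ C : ℝ, (∀ x, |f x| ≤ C * v x) →
      Integrable f π ∧ (∀ t x, Integrable f (kiter P t x)) ∧
        ∀ t x, |(∫ y, f y ∂(kiter P t x)) - ∫ y, f y ∂π| ≤ b₀ * ρ₀ ^ t * C * v x)
    (c : (Fin d → ℝ) → ℝ) (hcmeas : Measurable c) (Cc : ℝ) (hc : ∀ x, |c x| ≤ Cc * v x) :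
    ∃ bc : ℝ, ∀ α ∈ Set.Ioo (0 : ℝ) 1, ∀ x y,
      Summable (fun t : ℕ => |α ^ t * ∫ z, c z ∂(kiter P t x)|) ∧
      Summable (fun t : ℕ => |α ^ t * ∫ z, c z ∂(kiter P t y)|) ∧
      |(∑' t : ℕ, α ^ t * ∫ z, c z ∂(kiter P t x)) -
          ∑' t : ℕ, α ^ t * ∫ z, c z ∂(kiter P t y)| ≤ bc * (v x + v y) :=
  discounted_value_difference_bound_general d P π v b₀ ρ₀ hρ₀ herg c hcmeas Cc hc
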